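/- Let p be an odd prime, K a field, R = K[[z,x,y,v,w]]. Let d′ ≥ 1, a ≥ 0, S ≥ 0 be integers with a·p³ + S + d′ ≥ (p³−1)/2, and let B, A ∈ K[[x,y,v,w]] be units. Set f = z^{p³} + x^{ap³+(p³−p²)/2} w^{S}·( y^{p²} w^{d′}·B + x^{d′+(p²+1)/2}·A ). Let σ : R → R be the monomial y-chart substitution z↦yz, x↦yx, y↦y, v↦yv, w↦yw. Then σ(f) = y^{p³}·( z^{p³} + x^{ap³+(p³−p²)/2} y^{ap³+S+d′−(p³−1)/2} w^{S}·( y^{(p²−1)/2} w^{d′}·σ(B) + x^{d′+(p²+1)/2}·σ(A) ) ). Moreover σ(B) = λ + C, where λ ≠ 0 is the constant coefficient of B and every monomial occurring in C involves the variable y; σ(A) is a unit; and ord( y^{(p²−1)/2} w^{d′}·σ(B) + x^{d′+(p²+1)/2}·σ(A) ) = (p²−1)/2 + d′. -/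

import Mathlib

noncomputable section

open MvPowerSeries

/-- Substitution of power series (with zero constant terms) into a multivariate power
series, defined coefficient-wise: this is the unique continuous `K`-algebra endomorphism
of `K[[x_1,…,x_n]]` sending the variable `X i` to `s i`. -/
def psSubst {K : Type*} [Field K] {n : ℕ} (s : Fin n → MvPowerSeries (Fin n) K)
    (f : MvPowerSeries (Fin n) K) : MvPowerSeries (Fin n) K := fun e =>
  ∑ d ∈ Finset.Iic (Finsupp.equivFunOnFinite.symm fun _ : Fin n => e.sum fun _ k => k),
    MvPowerSeries.coeff d f * MvPowerSeries.coeff e (∏ i, s i ^ d i)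

namespace OddpAux
open Finsupp

variable {K : Type*} [Field K]

def sv : Fin 5 → MvPowerSeries (Fin 5) K := ![X 2 * X 0, X 2 * X 1, X 2, X 2 * X 3, X 2 * X 4]

def rst (e : Fin 5 →₀ ℕ) : ℕ := e 0 + e 1 + e 3 + e 4

def tau (e : Fin 5 →₀ ℕ) : Fin 5 →₀ ℕ :=
  equivFunOnFinite.symm fun i => if i = 2 then e 2 - rst e else e i

def mm (d : Fin 5 →₀ ℕ) : Fin 5 →₀ ℕ :=
  equivFunOnFinite.symm fun i => if i = 2 then d 0 + d 1 + d 2 + d 3 + d 4 else d i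

lemma tau_apply (e : Fin 5 →₀ ℕ) (i : Fin 5) :
    tau e i = if i = 2 then e 2 - rst e else e i := rfl

lemma mm_apply (d : Fin 5 →₀ ℕ) (i : Fin 5) :
    mm d i = if i = 2 then d 0 + d 1 + d 2 + d 3 + d 4 else d i := rfl

lemma sumv (e : Fin 5 →₀ ℕ) : (e.sum fun _ k => k) = e 0 + e 1 + e 2 + e 3 + e 4 := by
  rw [Finsupp.sum_fintype _ _ (fun _ => rfl), Fin.sum_univ_five]

lemma ext5 {f g : Fin 5 →₀ ℕ} (h0 : f 0 = g 0) (h1 : f 1 = g 1) (h2 : f 2 = g 2)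
    (h3 : f 3 = g 3) (h4 : f 4 = g 4) : f = g := by
  ext i; fin_cases i <;> assumption

lemma le5 {f g : Fin 5 →₀ ℕ} : f ≤ g ↔
    f 0 ≤ g 0 ∧ f 1 ≤ g 1 ∧ f 2 ≤ g 2 ∧ f 3 ≤ g 3 ∧ f 4 ≤ g 4 := by
  rw [Finsupp.le_def]
  constructor
  · exact fun h => ⟨h 0, h 1, h 2, h 3, h 4⟩
  · rintro ⟨h0, h1, h2, h3, h4⟩ i; fin_cases i <;> assumption

lemma prod_sv (d : Fin 5 →₀ ℕ) :
    (∏ i, (sv : Fin 5 → MvPowerSeries (Fin 5) K) i ^ d i) = monomial (mm d) (1 : K) := by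
  rw [Fin.prod_univ_five]
  simp only [sv, Matrix.cons_val_zero, Matrix.cons_val_one, Matrix.head_cons,
    Matrix.cons_val_two, Matrix.tail_cons, Matrix.cons_val_three, Matrix.cons_val_four]
  simp only [mul_pow, X_pow_eq, monomial_mul_monomial, one_mul, mul_one]
  have h : ((fun₀ | (2:Fin 5) => d 0) + fun₀ | (0:Fin 5) => d 0) + ((fun₀ | (2:Fin 5) => d 1) + fun₀ | (1:Fin 5) => d 1) + (fun₀ | (2:Fin 5) => d 2) +
          ((fun₀ | (2:Fin 5) => d 3) + fun₀ | (3:Fin 5) => d 3) +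
        ((fun₀ | (2:Fin 5) => d 4) + fun₀ | (4:Fin 5) => d 4) = mm d := by
    refine ext5 ?_ ?_ ?_ ?_ ?_ <;>
      simp [mm_apply, Finsupp.single_apply]
  rw [h]

lemma mm_eq_iff {d e : Fin 5 →₀ ℕ} : mm d = e ↔ (rst e ≤ e 2 ∧ d = tau e) := by
  constructor
  · rintro rfl
    have h0 := mm_apply d 0; have h1 := mm_apply d 1; have h2 := mm_apply d 2
    have h3 := mm_apply d 3; have h4 := mm_apply d 4
    simp at h0 h1 h2 h3 h4
    constructor
    · simp only [rst, h0, h1, h2, h3, h4]; omega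
    · refine ext5 ?_ ?_ ?_ ?_ ?_ <;>
        simp [tau_apply, rst, h0, h1, h2, h3, h4] <;> omega
  · rintro ⟨hadm, rfl⟩
    simp only [rst] at hadm
    refine ext5 ?_ ?_ ?_ ?_ ?_ <;>
      simp [mm_apply, tau_apply, rst] <;> omega

lemma coeff_psSubst (f : MvPowerSeries (Fin 5) K) (e : Fin 5 →₀ ℕ) :
    coeff e (psSubst sv f) = if rst e ≤ e 2 then coeff (tau e) f else 0 := by
  have : coeff e (psSubst sv f) =
      ∑ d ∈ Finset.Iic (Finsupp.equivFunOnFinite.symm fun _ : Fin 5 => e.sum fun _ k => k),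
        coeff d f * coeff e (monomial (mm d) (1 : K)) := by
    refine Finset.sum_congr rfl fun d _ => ?_
    rw [prod_sv]
  rw [this]
  have hterm : ∀ d : Fin 5 →₀ ℕ, coeff d f * coeff e (monomial (mm d) (1 : K)) =
      if mm d = e then coeff d f else 0 := by
    intro d
    rw [coeff_monomial]
    split_ifs with h h' h'
    · rw [mul_one]
    · exact absurd h.symm h'
    · exact absurd h'.symm h
    · rw [mul_zero]
  simp only [hterm]
  by_cases hadm : rst e ≤ e 2
  · rw [if_pos hadm]
    rw [Finset.sum_eq_single_of_mem (tau e)]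
    · rw [if_pos (mm_eq_iff.2 ⟨hadm, rfl⟩)]
    · rw [Finset.mem_Iic, le5]
      have hs := sumv e
      refine ⟨?_, ?_, ?_, ?_, ?_⟩ <;>
        simp [tau_apply, rst, coe_equivFunOnFinite_symm, hs, sumv] <;> omega
    · intro d _ hd
      rw [if_neg]
      intro hmm
      exact hd (mm_eq_iff.1 hmm).2
  · rw [if_neg hadm]
    refine Finset.sum_eq_zero fun d _ => ?_
    rw [if_neg]
    intro hmm
    exact hadm (mm_eq_iff.1 hmm).1

lemma psSubst_add (f g : MvPowerSeries (Fin 5) K) :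
    psSubst sv (f + g) = psSubst sv f + psSubst sv g := by
  ext e
  rw [map_add, coeff_psSubst, coeff_psSubst, coeff_psSubst, map_add]
  split_ifs <;> simp

lemma psSubst_monomial (m : Fin 5 →₀ ℕ) (c : K) :
    psSubst sv (monomial m c) = monomial (mm m) c := by
  ext e
  rw [coeff_psSubst, coeff_monomial, coeff_monomial]
  by_cases hadm : rst e ≤ e 2
  · rw [if_pos hadm]
    by_cases h : tau e = m
    · rw [if_pos h, if_pos]
      exact (mm_eq_iff.2 ⟨hadm, h.symm⟩).symm
    · rw [if_neg h, if_neg]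
      intro he
      exact h ((mm_eq_iff.1 he.symm).2).symm
  · rw [if_neg hadm, if_neg]
    intro he
    exact hadm (mm_eq_iff.1 he.symm).1

lemma psSubst_monomial_mul (m : Fin 5 →₀ ℕ) (g : MvPowerSeries (Fin 5) K) :
    psSubst sv (monomial m (1:K) * g) = monomial (mm m) (1:K) * psSubst sv g := by
  ext e
  rw [coeff_psSubst, coeff_monomial_mul, coeff_monomial_mul]
  have key : (rst e ≤ e 2 ∧ m ≤ tau e) ↔ (mm m ≤ e ∧ rst (e - mm m) ≤ (e - mm m) 2) := by
    rw [le5, le5]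
    simp only [tau_apply, mm_apply, rst, Finsupp.tsub_apply]
    simp
    omega
  by_cases hadm : rst e ≤ e 2
  · rw [if_pos hadm]
    by_cases hle : m ≤ tau e
    · have hr := key.1 ⟨hadm, hle⟩
      rw [if_pos hle, if_pos hr.1, coeff_psSubst, if_pos hr.2, one_mul, one_mul]
      have h1 := le5.1 hle
      have h2 := le5.1 hr.1
      simp only [tau_apply, mm_apply, rst] at h1 h2
      simp at h1 h2
      have heq : tau e - m = tau (e - mm m) := by
        refine ext5 ?_ ?_ ?_ ?_ ?_ <;>
          simp [tau_apply, mm_apply, rst, Finsupp.tsub_apply] <;> omega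
      rw [heq]
    · rw [if_neg hle]
      by_cases h1 : mm m ≤ e
      · rw [if_pos h1, coeff_psSubst, if_neg, mul_zero]
        intro h2
        exact hle (key.2 ⟨h1, h2⟩).2
      · rw [if_neg h1]
  · rw [if_neg hadm]
    by_cases h1 : mm m ≤ e
    · rw [if_pos h1, coeff_psSubst, if_neg, mul_zero]
      intro h2
      exact hadm (key.2 ⟨h1, h2⟩).1
    · rw [if_neg h1]

end OddpAux

/-- The power series `f` does not involve the variable `X i₀`. -/
def avoids {K : Type*} [Field K] {n : ℕ} (i₀ : Fin n) (f : MvPowerSeries (Fin n) K) : Prop :=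
  ∀ d : Fin n →₀ ℕ, d i₀ ≠ 0 → MvPowerSeries.coeff d f = 0

/-- The order (least total degree of an occurring monomial) of `f` equals `m`. -/
def ordIs {K : Type*} [Field K] {n : ℕ} (f : MvPowerSeries (Fin n) K) (m : ℕ) : Prop :=
  (∃ d : Fin n →₀ ℕ, (d.sum fun _ k => k) = m ∧ MvPowerSeries.coeff d f ≠ 0) ∧
  ∀ d : Fin n →₀ ℕ, MvPowerSeries.coeff d f ≠ 0 → m ≤ d.sum fun _ k => k

open OddpAux

/-- Odd-characteristic example, blowup (5): the monomial `y`-chart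
point blowup `σ` (`z ↦ yz`, `x ↦ yx`, `y ↦ y`, `v ↦ yv`, `w ↦ yw`).  Variables:
`z = X 0`, `x = X 1`, `y = X 2`, `v = X 3`, `w = X 4`.  Besides the transformation
formula, `σ(B) = λ + C` where `λ ≠ 0` is the constant coefficient of `B` and every
monomial of `C` involves `y`; `σ(A)` is a unit; and the residual factor has order
`(p²−1)/2 + d′`. -/
theorem oddp_fifth_blowup (p : ℕ) (hp : p.Prime) (hpodd : Odd p)
    (K : Type*) [Field K]
    (d' a S : ℕ) (hd'1 : 1 ≤ d') (hS : (p ^ 3 - 1) / 2 ≤ a * p ^ 3 + S + d')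
    (B A : MvPowerSeries (Fin 5) K) (hBz : avoids 0 B) (hAz : avoids 0 A)
    (hB : constantCoeff B ≠ 0) (hA : constantCoeff A ≠ 0)
    (f : MvPowerSeries (Fin 5) K)
    (hf : f = X 0 ^ p ^ 3 +
        X 1 ^ (a * p ^ 3 + (p ^ 3 - p ^ 2) / 2) * X 4 ^ S *
        (X 2 ^ p ^ 2 * X 4 ^ d' * B + X 1 ^ (d' + (p ^ 2 + 1) / 2) * A))
    (σ : MvPowerSeries (Fin 5) K → MvPowerSeries (Fin 5) K)
    (hσ : σ = psSubst ![X 2 * X 0, X 2 * X 1, X 2, X 2 * X 3, X 2 * X 4]) :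
    σ f = X 2 ^ p ^ 3 * (X 0 ^ p ^ 3 +
        X 1 ^ (a * p ^ 3 + (p ^ 3 - p ^ 2) / 2) *
          X 2 ^ (a * p ^ 3 + S + d' - (p ^ 3 - 1) / 2) * X 4 ^ S *
          (X 2 ^ ((p ^ 2 - 1) / 2) * X 4 ^ d' * σ B +
            X 1 ^ (d' + (p ^ 2 + 1) / 2) * σ A)) ∧
      (∃ Cs : MvPowerSeries (Fin 5) K,
        σ B = C (constantCoeff B) + Cs ∧
        ∀ e : Fin 5 →₀ ℕ, MvPowerSeries.coeff e Cs ≠ 0 → e 2 ≠ 0) ∧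
      constantCoeff B ≠ 0 ∧
      constantCoeff (σ A) ≠ 0 ∧
      ordIs (X 2 ^ ((p ^ 2 - 1) / 2) * X 4 ^ d' * σ B +
        X 1 ^ (d' + (p ^ 2 + 1) / 2) * σ A) ((p ^ 2 - 1) / 2 + d') := by
  have hsv : (psSubst ![X 2 * X 0, X 2 * X 1, X 2, X 2 * X 3, X 2 * X 4] :
      MvPowerSeries (Fin 5) K → MvPowerSeries (Fin 5) K) = psSubst sv := rfl
  rw [hsv] at hσ
  subst hσ hf
  obtain ⟨m2, hm2⟩ : Odd (p ^ 2) := hpodd.pow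
  obtain ⟨m3, hm3⟩ : Odd (p ^ 3) := hpodd.pow
  have hle : p ^ 2 ≤ p ^ 3 := Nat.pow_le_pow_right hp.pos (by norm_num)
  have htau0 : tau (0 : Fin 5 →₀ ℕ) = 0 := by
    refine ext5 ?_ ?_ ?_ ?_ ?_ <;> simp [tau_apply, rst]
  have hc0 : ∀ g : MvPowerSeries (Fin 5) K,
      constantCoeff (psSubst sv g) = constantCoeff g := by
    intro g
    rw [← coeff_zero_eq_constantCoeff, coeff_psSubst,
      if_pos (by simp [rst]), htau0]
  have mon_eq : ∀ {u v : Fin 5 →₀ ℕ}, u = v → monomial u (1:K) = monomial v 1 := by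
    rintro u v rfl; rfl
  refine ⟨?_, ?_, hB, ?_, ?_⟩
  · -- main transformation formula
    obtain ⟨A3, hA3⟩ : ∃ t, a * p ^ 3 = t := ⟨_, rfl⟩
    rw [hA3] at hS ⊢
    simp only [X_pow_eq, mul_add, ← mul_assoc, monomial_mul_monomial, one_mul, mul_one]
    rw [psSubst_add, psSubst_add, psSubst_monomial, psSubst_monomial_mul, psSubst_monomial_mul]
    congr 1
    · refine mon_eq (ext5 ?_ ?_ ?_ ?_ ?_) <;>
        simp [mm_apply, Finsupp.single_apply] <;> omega
    congr 1
    · congr 1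
      refine mon_eq (ext5 ?_ ?_ ?_ ?_ ?_) <;>
        simp [mm_apply, Finsupp.single_apply] <;> omega
    · congr 1
      refine mon_eq (ext5 ?_ ?_ ?_ ?_ ?_) <;>
        simp [mm_apply, Finsupp.single_apply] <;> omega
  · -- σ B = constant + Cs
    refine ⟨psSubst sv B - C (constantCoeff B), by ring, ?_⟩
    intro e he he2
    apply he
    rw [map_sub, coeff_psSubst, coeff_C]
    by_cases h0 : e = 0
    · subst h0
      rw [if_pos (by simp [rst]), htau0, if_pos rfl, coeff_zero_eq_constantCoeff, sub_self]
    · rw [if_neg, if_neg h0, sub_zero]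
      intro hadm
      apply h0
      simp only [rst] at hadm
      refine ext5 ?_ ?_ ?_ ?_ ?_ <;> simp <;> omega
  · rw [hc0]; exact hA
  · -- ordIs
    simp only [X_pow_eq, monomial_mul_monomial, one_mul, mul_one]
    constructor
    · refine ⟨Finsupp.single 2 ((p ^ 2 - 1) / 2) + Finsupp.single 4 d', ?_, ?_⟩
      · rw [sumv]
        simp [Finsupp.single_apply]
      · have hne : ¬ ((Finsupp.single (1 : Fin 5) (d' + (p ^ 2 + 1) / 2)) ≤
            Finsupp.single 2 ((p ^ 2 - 1) / 2) + Finsupp.single 4 d') := by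
          rw [le5]
          simp [Finsupp.single_apply]
          omega
        rw [map_add, coeff_monomial_mul, coeff_monomial_mul, if_pos le_rfl, if_neg hne,
          tsub_self, one_mul, add_zero, coeff_zero_eq_constantCoeff, hc0]
        exact hB
    · intro d hd
      rw [sumv]
      rw [map_add, coeff_monomial_mul, coeff_monomial_mul] at hd
      rcases ne_or_eq ((if Finsupp.single 2 ((p ^ 2 - 1) / 2) + Finsupp.single 4 d' ≤ d then
          (1:K) * coeff (d - (Finsupp.single 2 ((p ^ 2 - 1) / 2) + Finsupp.single 4 d'))
            (psSubst sv B) else 0)) 0 with h1 | h1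
      · have hle1 : Finsupp.single 2 ((p ^ 2 - 1) / 2) + Finsupp.single 4 d' ≤ d := by
          by_contra hc
          exact h1 (if_neg hc)
        have := le5.1 hle1
        simp [Finsupp.single_apply] at this
        omega
      · have h2 : Finsupp.single (1 : Fin 5) (d' + (p ^ 2 + 1) / 2) ≤ d := by
          by_contra hc
          rw [h1, if_neg hc, zero_add] at hd
          exact hd rfl
        have := le5.1 h2
        simp [Finsupp.single_apply] at this
        omega
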